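/- Let p be an integer-valued supermodular set-function on the subsets of a nonempty finite set S with p(∅) = 0, and assume Ḃ(p) is nonempty. Then an element m of Ḃ(p) minimizes the difference-sum Δ(z) = Σ_{(s,t) : s ≠ t} |z(s) − z(t)| (the sum taken over all ordered pairs of distinct elements of S) over Ḃ(p) if and only if m is a decreasingly minimal element of Ḃ(p). -/

import Mathlib

open Finset

variable {α : Type*}

/-- Integer-valued supermodular set-function. -/
def Supermodular [DecidableEq α] (p : Finset α → ℤ) : Prop :=
  ∀ X Y : Finset α, p X + p Y ≤ p (X ∩ Y) + p (X ∪ Y)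

/-- The M-convex set `Ḃ(p)` of integral elements of the base-polyhedron `B'(p)`:
all `m : α → ℤ` with `m̃(X) ≥ p(X)` for every `X` and `m̃(S) = p(S)`. -/
def Bdot [Fintype α] (p : Finset α → ℤ) : Set (α → ℤ) :=
  {m | (∀ X : Finset α, p X ≤ ∑ s ∈ X, m s) ∧ (∑ s, m s) = p Finset.univ}

/-- `x↓`: the values of `x` arranged in nonincreasing order. -/
def sortedDesc [Fintype α] (x : α → ℤ) : List ℤ :=
  ((Finset.univ.val.map x).sort (· ≤ ·)).reverse

/-- `x↑`: the values of `x` arranged in nondecreasing order. -/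
def sortedAsc [Fintype α] (x : α → ℤ) : List ℤ :=
  (Finset.univ.val.map x).sort (· ≤ ·)

/-- `x ≤_dec y`: `x↓` is lexicographically less than or equal to `y↓`. -/
def DecLE [Fintype α] (x y : α → ℤ) : Prop :=
  sortedDesc x = sortedDesc y ∨ List.Lex (· < ·) (sortedDesc x) (sortedDesc y)

/-- `x ≤_inc y`: `x↑` is lexicographically less than or equal to `y↑`. -/
def IncLE [Fintype α] (x y : α → ℤ) : Prop :=
  sortedAsc x = sortedAsc y ∨ List.Lex (· < ·) (sortedAsc x) (sortedAsc y)

/-- `m` is a decreasingly minimal element of `Bdot p`. -/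
def DecMin [Fintype α] (p : Finset α → ℤ) (m : α → ℤ) : Prop :=
  m ∈ Bdot p ∧ ∀ y ∈ Bdot p, DecLE m y

/-! A 1-tightening step moves one unit from `s` to `t` where `m s ≥ m t + 2`; it strictly
decreases both `m↓` and `Δ`, so a dec-min or a `Δ`-minimizing `m` admits none. Conversely, let
`m` admit no such step and `y ∈ Ḃ(p)`, `y ≠ m`. Simultaneous exchange gives `s`, `t` with
`y s < m s`, `m t < y t` such that `m - χ_s + χ_t` and `y - χ_t + χ_s` lie in `Ḃ(p)`. The first
is not a tightening step, so `m s ≤ m t + 1` and hence `y s < y t`: the move from `y` to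
`y - χ_t + χ_s` goes from a larger to a smaller value, so it does not increase `y↓` or `Δ`, and it
brings `y` closer to `m` in `ℓ₁`. Induction on that distance gives `m ≤_dec y` and
`Δ m ≤ Δ y`. -/

section Transfer
variable [DecidableEq α]

def transfer (x : α → ℤ) (s t : α) : α → ℤ := x - Pi.single s 1 + Pi.single t 1

variable {x : α → ℤ} {s t u : α}

lemma transfer_apply_left (hst : s ≠ t) : transfer x s t s = x s - 1 := by
  simp [transfer, hst]

lemma transfer_apply_right (hst : s ≠ t) : transfer x s t t = x t + 1 := by
  simp [transfer, hst.symm]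

lemma transfer_apply_of_ne (hus : u ≠ s) (hut : u ≠ t) : transfer x s t u = x u := by
  simp [transfer, hus, hut]

lemma sum_transfer (X : Finset α) :
    ∑ u ∈ X, transfer x s t u =
      ∑ u ∈ X, x u - (if s ∈ X then 1 else 0) + (if t ∈ X then 1 else 0) := by
  simp only [transfer, Pi.add_apply, Pi.sub_apply, sum_add_distrib, sum_sub_distrib,
    sum_pi_single']

lemma sum_eq_add_add_sum_compl_pair [Fintype α] {M : Type*} [AddCommMonoid M]
    (hst : s ≠ t) (f : α → M) : ∑ u, f u = f s + f t + ∑ u ∈ {s, t}ᶜ, f u := by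
  rw [← sum_add_sum_compl {s, t} f, sum_pair hst]

end Transfer

lemma List.lex_lt_of_count_lt_of_count_eq_above {L L' : List ℤ} (hL : L.Pairwise (· ≥ ·))
    (hL' : L'.Pairwise (· ≥ ·)) {v : ℤ} (hv : L'.count v < L.count v)
    (habove : ∀ w, v < w → L'.count w = L.count w) : List.Lex (· < ·) L' L := by
  induction L generalizing L' with
  | nil => simp at hv
  | cons a T ih =>
    obtain _ | ⟨a', T'⟩ := L'
    · exact List.Lex.nil
    rw [List.pairwise_cons] at hL hL'
    -- `a` is the maximum of `a :: T`; the count of `a'` (when `a' > v`) or of `v` shows `a' ≤ a`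
    have ha' : a' ≤ a := by
      by_contra! hlt
      have hmax : ∀ z ∈ a :: T, z ≤ a := by
        simpa using fun z hz => hL.1 z hz
      rcases lt_or_ge v a' with hva' | hva'
      · have hpos : 0 < (a :: T).count a' := by
          rw [← habove a' hva']; simp
        exact absurd (hmax _ (List.count_pos_iff.mp hpos)) (not_le.2 hlt)
      · have := hmax _ (List.count_pos_iff.mp (Nat.zero_lt_of_lt hv))
        omega
    rcases ha'.lt_or_eq with hlt | rfl
    · exact List.Lex.rel hlt
    refine List.Lex.cons (ih hL.2 hL'.2 ?_ fun w hw => ?_)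
    · simp only [List.count_cons] at hv
      omega
    · have := habove w hw
      simp only [List.count_cons] at this
      omega

section SortedDesc
variable [Fintype α]

lemma sortedDesc_pairwise (x : α → ℤ) : (sortedDesc x).Pairwise (· ≥ ·) :=
  List.pairwise_reverse.2 (Multiset.pairwise_sort _ _)

lemma count_sortedDesc (x : α → ℤ) (v : ℤ) :
    (sortedDesc x).count v = ∑ u, if x u = v then 1 else 0 := by
  classical
  rw [sortedDesc, List.count_reverse, ← Multiset.coe_count, Multiset.sort_eq,
    Multiset.count_map, ← filter_val, ← card_def, card_filter]
  simp only [eq_comm]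

lemma sortedDesc_eq_of_count_eq {x y : α → ℤ}
    (h : ∀ v, (sortedDesc x).count v = (sortedDesc y).count v) : sortedDesc x = sortedDesc y :=
  (List.perm_iff_count.2 h).eq_of_sortedGE (sortedDesc_pairwise x).sortedGE
    (sortedDesc_pairwise y).sortedGE

lemma decLE_trans {x y z : α → ℤ} (hxy : DecLE x y) (hyz : DecLE y z) : DecLE x z := by
  rcases hxy with hxy | hxy <;> rcases hyz with hyz | hyz
  · exact Or.inl (hxy.trans hyz)
  · exact Or.inr (hxy ▸ hyz)
  · exact Or.inr (hyz ▸ hxy)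
  · exact Or.inr (List.lex_trans lt_trans hxy hyz)

variable [DecidableEq α] {x : α → ℤ} {s t : α}

lemma count_sortedDesc_transfer (hst : s ≠ t) (v : ℤ) :
    (sortedDesc (transfer x s t)).count v + (if x s = v then 1 else 0) +
        (if x t = v then 1 else 0) =
      (sortedDesc x).count v + (if x s - 1 = v then 1 else 0) + (if x t + 1 = v then 1 else 0) := by
  rw [count_sortedDesc, count_sortedDesc, sum_eq_add_add_sum_compl_pair hst,
    sum_eq_add_add_sum_compl_pair hst (fun u => if x u = v then 1 else 0),
    transfer_apply_left hst, transfer_apply_right hst,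
    sum_congr rfl fun u hu => by
      rw [transfer_apply_of_ne (by simp_all) (by simp_all)]]
  omega

lemma sortedDesc_transfer_eq (h : x s = x t + 1) : sortedDesc (transfer x s t) = sortedDesc x := by
  have hst : s ≠ t := by rintro rfl; omega
  refine sortedDesc_eq_of_count_eq fun v => ?_
  have := count_sortedDesc_transfer (x := x) hst v
  split_ifs at this <;> omega

lemma sortedDesc_transfer_lex (h : x t + 2 ≤ x s) :
    List.Lex (· < ·) (sortedDesc (transfer x s t)) (sortedDesc x) := by
  have hst : s ≠ t := by rintro rfl; omega
  refine List.lex_lt_of_count_lt_of_count_eq_above (sortedDesc_pairwise x)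
    (sortedDesc_pairwise _) (v := x s) ?_ fun w hw => ?_
  · have := count_sortedDesc_transfer (x := x) hst (x s)
    split_ifs at this <;> omega
  · have := count_sortedDesc_transfer (x := x) hst w
    split_ifs at this <;> omega

lemma decLE_transfer (h : x t < x s) : DecLE (transfer x s t) x := by
  rcases (Int.add_one_le_iff.2 h).eq_or_lt with h | h
  · exact Or.inl (sortedDesc_transfer_eq h.symm)
  · exact Or.inr (sortedDesc_transfer_lex (by omega))

end SortedDesc

section DiffSum
variable [Fintype α]

lemma sum_sum_abs_sub_comm (y z : α → ℤ) :
    ∑ u, ∑ v, |y u - z v| = ∑ u, ∑ v, |z u - y v| := by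
  rw [sum_comm]
  simp only [abs_sub_comm]

variable [DecidableEq α]

def diffSum (x : α → ℤ) : ℤ := ∑ q ∈ univ.offDiag, |x q.1 - x q.2|

lemma diffSum_eq_sum_sum (x : α → ℤ) : diffSum x = ∑ u, ∑ v, |x u - x v| := by
  have hoff : (univ : Finset α).offDiag = (univ ×ˢ univ).filter fun q => q.1 ≠ q.2 := by
    ext; simp
  rw [diffSum, hoff, sum_filter_of_ne fun q _ hq => by rintro h; simp [h] at hq,
    sum_product]

variable {x : α → ℤ} {s t : α}

lemma sum_abs_sub_transfer_add (hst : s ≠ t) (c : ℤ) :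
    ∑ v, |c - transfer x s t v| + |c - x s| + |c - x t| =
      ∑ v, |c - x v| + |c - (x s - 1)| + |c - (x t + 1)| := by
  rw [sum_eq_add_add_sum_compl_pair hst, sum_eq_add_add_sum_compl_pair hst (fun v => |c - x v|),
    transfer_apply_left hst, transfer_apply_right hst,
    sum_congr rfl fun u hu => by
      rw [transfer_apply_of_ne (by simp_all) (by simp_all)]]
  ring

lemma sum_abs_sub_transfer_le (h : x t < x s) (c : ℤ) :
    ∑ v, |c - transfer x s t v| ≤ ∑ v, |c - x v| := by
  have := sum_abs_sub_transfer_add (x := x) (s := s) (t := t) (by rintro rfl; omega) c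
  rcases abs_cases (c - x s) with ⟨_, _⟩ | ⟨_, _⟩ <;>
  rcases abs_cases (c - x t) with ⟨_, _⟩ | ⟨_, _⟩ <;>
  rcases abs_cases (c - (x s - 1)) with ⟨_, _⟩ | ⟨_, _⟩ <;>
  rcases abs_cases (c - (x t + 1)) with ⟨_, _⟩ | ⟨_, _⟩ <;> omega

lemma sum_abs_sub_transfer_lt (hc : x t < c) (hc' : c < x s) :
    ∑ v, |c - transfer x s t v| < ∑ v, |c - x v| := by
  have := sum_abs_sub_transfer_add (x := x) (s := s) (t := t) (by rintro rfl; omega) c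
  rw [abs_of_neg (by omega : c - x s < 0), abs_of_pos (by omega : 0 < c - x t),
    abs_of_nonpos (by omega : c - (x s - 1) ≤ 0), abs_of_nonneg (by omega : 0 ≤ c - (x t + 1))]
    at this
  omega

lemma diffSum_transfer_le (h : x t < x s) : diffSum (transfer x s t) ≤ diffSum x := by
  rw [diffSum_eq_sum_sum, diffSum_eq_sum_sum]
  calc ∑ u, ∑ v, |transfer x s t u - transfer x s t v|
      ≤ ∑ u, ∑ v, |transfer x s t u - x v| :=
        sum_le_sum fun u _ => sum_abs_sub_transfer_le h _
    _ = ∑ u, ∑ v, |x u - transfer x s t v| := sum_sum_abs_sub_comm _ _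
    _ ≤ ∑ u, ∑ v, |x u - x v| := sum_le_sum fun u _ => sum_abs_sub_transfer_le h _

/-- The strict decrease comes from the row of `s`, whose new value `x s - 1` lies strictly
between `x t` and `x s`. -/
lemma diffSum_transfer_lt (h : x t + 2 ≤ x s) : diffSum (transfer x s t) < diffSum x := by
  have hst : s ≠ t := by rintro rfl; omega
  have hlt : x t < x s := by omega
  rw [diffSum_eq_sum_sum, diffSum_eq_sum_sum]
  calc ∑ u, ∑ v, |transfer x s t u - transfer x s t v|
      < ∑ u, ∑ v, |transfer x s t u - x v| :=
        sum_lt_sum (fun u _ => sum_abs_sub_transfer_le hlt _) ⟨s, mem_univ s,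
          sum_abs_sub_transfer_lt (by rw [transfer_apply_left hst]; omega)
            (by rw [transfer_apply_left hst]; omega)⟩
    _ = ∑ u, ∑ v, |x u - transfer x s t v| := sum_sum_abs_sub_comm _ _
    _ ≤ ∑ u, ∑ v, |x u - x v| := sum_le_sum fun u _ => sum_abs_sub_transfer_le hlt _

end DiffSum

section Tight
variable [Fintype α] [DecidableEq α] {p : Finset α → ℤ} {m y : α → ℤ}

def IsTight (p : Finset α → ℤ) (m : α → ℤ) (X : Finset α) : Prop := ∑ u ∈ X, m u = p X

lemma IsTight.inter_union (hp : Supermodular p) (hm : m ∈ Bdot p) {X Y : Finset α}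
    (hX : IsTight p m X) (hY : IsTight p m Y) : IsTight p m (X ∩ Y) ∧ IsTight p m (X ∪ Y) := by
  have := sum_union_inter (s₁ := X) (s₂ := Y) (f := m)
  have := hm.1 (X ∩ Y)
  have := hm.1 (X ∪ Y)
  have := hp X Y
  unfold IsTight at *
  constructor <;> linarith

lemma exists_minimal_tight (hp : Supermodular p) (hm : m ∈ Bdot p) (s : α) :
    ∃ T, s ∈ T ∧ IsTight p m T ∧ ∀ X, s ∈ X → IsTight p m X → T ⊆ X := by
  classical
  let F := univ.filter fun X => s ∈ X ∧ IsTight p m X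
  obtain ⟨hsT, hT⟩ : s ∈ F.inf id ∧ IsTight p m (F.inf id) :=
    inf_induction (p := fun T => s ∈ T ∧ IsTight p m T) ⟨mem_univ s, hm.2⟩
      (fun A hA B hB => ⟨mem_inter.2 ⟨hA.1, hB.1⟩, (hA.2.inter_union hp hm hB.2).1⟩)
      fun X hX => (mem_filter.1 hX).2
  exact ⟨F.inf id, hsT, hT, fun X hsX hX => inf_le (f := id) (mem_filter.2 ⟨mem_univ X, hsX, hX⟩)⟩

lemma exists_maximal_tight_notMem (hp : Supermodular p) (h0 : p ∅ = 0) (hm : m ∈ Bdot p)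
    (s : α) : ∃ U, s ∉ U ∧ IsTight p m U ∧ ∀ X, s ∉ X → IsTight p m X → X ⊆ U := by
  classical
  let F := univ.filter fun X => s ∉ X ∧ IsTight p m X
  obtain ⟨hsU, hU⟩ : s ∉ F.sup id ∧ IsTight p m (F.sup id) :=
    sup_induction (p := fun U => s ∉ U ∧ IsTight p m U) ⟨notMem_empty s, by simp [IsTight, h0]⟩
      (fun A hA B hB => ⟨by simp [hA.1, hB.1], (hA.2.inter_union hp hm hB.2).2⟩)
      fun X hX => (mem_filter.1 hX).2
  exact ⟨F.sup id, hsU, hU, fun X hsX hX => le_sup (f := id) (mem_filter.2 ⟨mem_univ X, hsX, hX⟩)⟩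

lemma transfer_mem_Bdot (hm : m ∈ Bdot p) {s t : α}
    (h : ∀ X, s ∈ X → IsTight p m X → t ∈ X) : transfer m s t ∈ Bdot p := by
  refine ⟨fun X => ?_, ?_⟩
  · have hX := hm.1 X
    rw [sum_transfer]
    by_cases hsX : s ∈ X
    · by_cases htX : t ∈ X
      · simp only [hsX, htX, if_true]; omega
      · have hloose : ¬ IsTight p m X := fun hX => htX (h X hsX hX)
        unfold IsTight at hloose
        simp only [hsX, htX, if_true, if_false]; omega
    · simp only [hsX, if_false]; split_ifs <;> omega
  · rw [sum_transfer, ← hm.2]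
    simp

/-- Simultaneous exchange: take `T` the smallest `m`-tight set containing `s` and `U` the largest
`y`-tight set avoiding `s`; supermodularity forces some `t ∈ T \ U` with `m t < y t`. -/
lemma exists_transfer_mem_Bdot_and_transfer_mem_Bdot (hp : Supermodular p) (h0 : p ∅ = 0)
    (hm : m ∈ Bdot p) (hy : y ∈ Bdot p) {s : α} (hs : y s < m s) :
    ∃ t, m t < y t ∧ transfer m s t ∈ Bdot p ∧ transfer y t s ∈ Bdot p := by
  obtain ⟨T, hsT, hT, hTmin⟩ := exists_minimal_tight hp hm s
  obtain ⟨U, hsU, hU, hUmax⟩ := exists_maximal_tight_notMem hp h0 hy s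
  obtain ⟨t, htTU, ht⟩ : ∃ t ∈ T \ U, m t < y t := by
    by_contra! hle
    have hlt : ∑ u ∈ T \ U, y u < ∑ u ∈ T \ U, m u :=
      sum_lt_sum hle ⟨s, mem_sdiff.2 ⟨hsT, hsU⟩, hs⟩
    have hyTU : ∑ u ∈ T \ U, y u + ∑ u ∈ U, y u = ∑ u ∈ T ∪ U, y u := by
      rw [← union_sdiff_right, sum_sdiff subset_union_right]
    have hmT := sum_inter_add_sum_sdiff T U m
    unfold IsTight at hT hU
    linarith [hp T U, hy.1 (T ∪ U), hm.1 (T ∩ U)]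
  rw [mem_sdiff] at htTU
  refine ⟨t, ht, transfer_mem_Bdot hm fun X hsX hX => hTmin X hsX hX htTU.1,
    transfer_mem_Bdot hy fun X htX hX => ?_⟩
  by_contra hsX
  exact htTU.2 (hUmax X hsX hX htX)

end Tight

section TighteningStep
variable [Fintype α] [DecidableEq α] {p : Finset α → ℤ} {m y : α → ℤ}

def NoTighteningStep (p : Finset α → ℤ) (m : α → ℤ) : Prop :=
  ∀ s t, m t + 2 ≤ m s → transfer m s t ∉ Bdot p

lemma sum_abs_sub_transfer_add_two {s t : α} (hs : y s < m s) (ht : m t < y t) :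
    ∑ u, |m u - transfer y t s u| + 2 = ∑ u, |m u - y u| := by
  have hst : s ≠ t := by rintro rfl; omega
  rw [sum_eq_add_add_sum_compl_pair hst, sum_eq_add_add_sum_compl_pair hst (fun u => |m u - y u|),
    transfer_apply_left hst.symm, transfer_apply_right hst.symm,
    sum_congr rfl fun u hu => by
      rw [transfer_apply_of_ne (by simp_all) (by simp_all)],
    abs_of_nonneg (by omega : 0 ≤ m s - (y s + 1)), abs_of_nonpos (by omega : m t - (y t - 1) ≤ 0),
    abs_of_pos (by omega : 0 < m s - y s), abs_of_neg (by omega : m t - y t < 0)]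
  ring

theorem NoTighteningStep.decLE_and_diffSum_le (hp : Supermodular p) (h0 : p ∅ = 0)
    (hm : m ∈ Bdot p) (hns : NoTighteningStep p m) (hy : y ∈ Bdot p) :
    DecLE m y ∧ diffSum m ≤ diffSum y := by
  induction hn : (∑ u, |m u - y u|).toNat using Nat.strong_induction_on generalizing y with
  | _ n ih =>
  by_cases hmy : m = y
  · subst hmy
    exact ⟨Or.inl rfl, le_rfl⟩
  obtain ⟨s, hs⟩ : ∃ s, y s < m s := by
    by_contra! hle
    exact hmy (funext fun u => ((sum_eq_sum_iff_of_le fun u _ => hle u).1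
      (hm.2.trans hy.2.symm) u (mem_univ u)))
  obtain ⟨t, ht, hmst, hyts⟩ := exists_transfer_mem_Bdot_and_transfer_mem_Bdot hp h0 hm hy hs
  have hgap : m s ≤ m t + 1 := by
    by_contra! hgap
    exact hns s t (by omega) hmst
  have hdist := sum_abs_sub_transfer_add_two hs ht
  have hdist_nonneg : 0 ≤ ∑ u, |m u - transfer y t s u| := sum_nonneg fun u _ => abs_nonneg _
  obtain ⟨hdec, hdiff⟩ := ih _ (by omega) hyts rfl
  exact ⟨decLE_trans hdec (decLE_transfer (by omega)),
    hdiff.trans (diffSum_transfer_le (by omega))⟩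

lemma noTighteningStep_of_diffSum_le (hmin : ∀ y ∈ Bdot p, diffSum m ≤ diffSum y) :
    NoTighteningStep p m := fun _ _ hgap hmem =>
  (diffSum_transfer_lt hgap).not_ge (hmin _ hmem)

lemma noTighteningStep_of_decLE (hmin : ∀ y ∈ Bdot p, DecLE m y) : NoTighteningStep p m := by
  intro s t hgap hmem
  have hlex := sortedDesc_transfer_lex hgap
  rcases hmin _ hmem with heq | hlt
  · exact (irrefl_of (List.Lex (· < ·)) _) (heq ▸ hlex)
  · exact asymm hlt hlex

end TighteningStep

theorem stmt14_general [Fintype α] [DecidableEq α]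
    (p : Finset α → ℤ) (hp : Supermodular p) (h0 : p ∅ = 0)
    (m : α → ℤ) (hm : m ∈ Bdot p) :
    (∀ y ∈ Bdot p,
        ∑ q ∈ Finset.univ.offDiag, |m q.1 - m q.2| ≤
          ∑ q ∈ Finset.univ.offDiag, |y q.1 - y q.2|) ↔
      (∀ y ∈ Bdot p, DecLE m y) :=
  ⟨fun hmin _ hy => ((noTighteningStep_of_diffSum_le hmin).decLE_and_diffSum_le hp h0 hm hy).1,
    fun hmin _ hy => ((noTighteningStep_of_decLE hmin).decLE_and_diffSum_le hp h0 hm hy).2⟩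

/-- An element of `Ḃ(p)` minimizes the difference-sum
`Δ(z) = Σ_{s ≠ t} |z(s) − z(t)|` (over ordered pairs) over `Ḃ(p)` iff
it is a dec-min element of `Ḃ(p)`. -/
theorem stmt14 [Fintype α] [DecidableEq α] [Nonempty α]
    (p : Finset α → ℤ) (hp : Supermodular p) (h0 : p ∅ = 0)
    (hne : (Bdot p).Nonempty)
    (m : α → ℤ) (hm : m ∈ Bdot p) :
    (∀ y ∈ Bdot p,
        ∑ q ∈ Finset.univ.offDiag, |m q.1 - m q.2| ≤
          ∑ q ∈ Finset.univ.offDiag, |y q.1 - y q.2|) ↔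
      (∀ y ∈ Bdot p, DecLE m y) :=
  stmt14_general p hp h0 m hm
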